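/- arXiv:2412.14667 — 9 statements merged into one kernel-verified Lean document; each statement's English description precedes it below -/
import Mathlib

section
/- Let d, c : ℝ → ℝ be continuous and bounded with d(t) ≥ δ for some δ > 0 and all t. Then the function b(t) := -∫_t^∞ exp(∫_s^t d(l) dl) · c(s) ds is well-defined, bounded, solves the linear ODE x' = d(t)·x + c(t) on ℝ, and is the unique bounded solution of this equation on ℝ. -/
open MeasureTheory intervalIntegral

/-- The candidate bounded solution of `x' = d(t)x + c(t)`. -/
noncomputable def boundedSol (d c : ℝ → ℝ) (t : ℝ) : ℝ :=
  -∫ s in Set.Ioi t, Real.exp (∫ l in s..t, d l) * c s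

theorem stmt0 (d c : ℝ → ℝ) (hd : Continuous d) (hc : Continuous c)
    (hdb : Bornology.IsBounded (Set.range d)) (hcb : Bornology.IsBounded (Set.range c))
    (δ : ℝ) (hδ : 0 < δ) (hlow : ∀ t, δ ≤ d t) :
    (∀ t : ℝ, IntegrableOn (fun s => Real.exp (∫ l in s..t, d l) * c s) (Set.Ioi t)) ∧
    Bornology.IsBounded (Set.range (boundedSol d c)) ∧
    (∀ t : ℝ, HasDerivAt (boundedSol d c) (d t * boundedSol d c t + c t) t) ∧
    (∀ x : ℝ → ℝ, (∀ t : ℝ, HasDerivAt x (d t * x t + c t) t) →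
      Bornology.IsBounded (Set.range x) → x = boundedSol d c) := by
  -- bound on c
  obtain ⟨C, hC⟩ : ∃ C, ∀ s, |c s| ≤ C := by
    obtain ⟨C, hC⟩ := isBounded_iff_forall_norm_le.1 hcb
    exact ⟨C, fun s => hC _ (Set.mem_range_self s)⟩
  have hC0 : 0 ≤ C := le_trans (abs_nonneg _) (hC 0)
  -- the primitive of d and its properties
  set D : ℝ → ℝ := fun t => ∫ l in (0:ℝ)..t, d l with hDdef
  have hD : ∀ t, HasDerivAt D (d t) t := fun t =>
    intervalIntegral.integral_hasDerivAt_right (hd.intervalIntegrable _ _)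
      (hd.stronglyMeasurableAtFilter _ _) hd.continuousAt
  have hDsub : ∀ s t : ℝ, (∫ l in s..t, d l) = D t - D s := fun s t =>
    (intervalIntegral.integral_interval_sub_left (hd.intervalIntegrable _ _)
      (hd.intervalIntegrable _ _)).symm
  have hD0 : D 0 = 0 := intervalIntegral.integral_same
  have hDcont : Continuous D := continuous_iff_continuousAt.2 fun t => (hD t).continuousAt
  have hDgrow : ∀ t s : ℝ, t ≤ s → D t + δ * (s - t) ≤ D s := by
    intro t s hts
    have h1 : (∫ l in t..s, (δ : ℝ)) ≤ ∫ l in t..s, d l := by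
      apply intervalIntegral.integral_mono_on hts intervalIntegrable_const
        (hd.intervalIntegrable _ _)
      intro x _; exact hlow x
    rw [intervalIntegral.integral_const, smul_eq_mul] at h1
    have h2 := hDsub t s
    nlinarith
  -- the helper integrand
  set h : ℝ → ℝ := fun s => Real.exp (-(D s)) * c s with hhdef
  have hhcont : Continuous h := (hDcont.neg.rexp).mul hc
  -- pointwise bound of h on Ioi t
  have hhbd : ∀ t : ℝ, ∀ s ∈ Set.Ioi t,
      ‖h s‖ ≤ C * Real.exp (δ * t - D t) * Real.exp (-δ * s) := by
    intro t s hs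
    have hts : t ≤ s := le_of_lt hs
    have hgrow := hDgrow t s hts
    have hmono : Real.exp (-(D s)) ≤ Real.exp (δ * t - D t) * Real.exp (-δ * s) := by
      rw [← Real.exp_add]
      apply Real.exp_le_exp.2
      nlinarith
    have : ‖h s‖ = Real.exp (-(D s)) * |c s| := by
      rw [hhdef]; simp [abs_mul, abs_of_pos (Real.exp_pos _), Real.norm_eq_abs]
    rw [this]
    calc Real.exp (-(D s)) * |c s| ≤ (Real.exp (δ * t - D t) * Real.exp (-δ * s)) * C := by
          apply mul_le_mul hmono (hC s) (abs_nonneg _)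
          positivity
      _ = C * Real.exp (δ * t - D t) * Real.exp (-δ * s) := by ring
  -- integrability of h on Ioi t
  have hhint : ∀ t : ℝ, IntegrableOn h (Set.Ioi t) := by
    intro t
    apply Integrable.mono'
      ((exp_neg_integrableOn_Ioi t hδ).const_mul (C * Real.exp (δ * t - D t)))
      (hhcont.aestronglyMeasurable.restrict)
    exact ae_restrict_of_forall_mem measurableSet_Ioi (hhbd t)
  -- value of the exponential integral
  have hIexp : ∀ t : ℝ, (∫ s in Set.Ioi t, Real.exp (-δ * s)) = Real.exp (-δ * t) / δ := by
    intro t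
    have hderiv : ∀ x ∈ Set.Ici t,
        HasDerivAt (fun u => -(Real.exp (-δ * u) / δ)) (Real.exp (-δ * x)) x := by
      intro x _
      have h1 : HasDerivAt (fun u : ℝ => -δ * u) (-δ) x := by
        simpa using (hasDerivAt_id x).const_mul (-δ)
      have h2 := h1.exp
      have h3 := (h2.div_const δ).neg
      refine h3.congr_deriv ?_
      rw [mul_neg, neg_div, neg_neg, mul_div_assoc, div_self hδ.ne', mul_one]
    have htend : Filter.Tendsto (fun u => -(Real.exp (-δ * u) / δ)) Filter.atTop (nhds 0) := by
      have h1 : Filter.Tendsto (fun u : ℝ => δ * u) Filter.atTop Filter.atTop :=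
        Filter.Tendsto.const_mul_atTop hδ Filter.tendsto_id
      have h2 : Filter.Tendsto (fun u : ℝ => Real.exp (-(δ * u))) Filter.atTop (nhds 0) :=
        Real.tendsto_exp_neg_atTop_nhds_zero.comp h1
      have h3 : Filter.Tendsto (fun u : ℝ => -(Real.exp (-δ * u) / δ)) Filter.atTop
          (nhds (-(0 / δ))) := by
        apply Filter.Tendsto.neg
        apply Filter.Tendsto.div_const
        simpa [neg_mul] using h2
      simpa using h3
    have := integral_Ioi_of_hasDerivAt_of_tendsto' hderiv (exp_neg_integrableOn_Ioi t hδ) htend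
    rw [this]; ring
  -- bound on the tail integral of h
  have hFbd : ∀ t : ℝ, ‖∫ s in Set.Ioi t, h s‖ ≤
      C * Real.exp (δ * t - D t) * (Real.exp (-δ * t) / δ) := by
    intro t
    have hb : ∀ᵐ s ∂(volume.restrict (Set.Ioi t)),
        ‖h s‖ ≤ C * Real.exp (δ * t - D t) * Real.exp (-δ * s) :=
      ae_restrict_of_forall_mem measurableSet_Ioi (hhbd t)
    calc ‖∫ s in Set.Ioi t, h s‖
        ≤ ∫ s in Set.Ioi t, C * Real.exp (δ * t - D t) * Real.exp (-δ * s) :=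
          norm_integral_le_of_norm_le
            ((exp_neg_integrableOn_Ioi t hδ).const_mul (C * Real.exp (δ * t - D t))) hb
      _ = C * Real.exp (δ * t - D t) * ∫ s in Set.Ioi t, Real.exp (-δ * s) := by
          rw [MeasureTheory.integral_const_mul]
      _ = C * Real.exp (δ * t - D t) * (Real.exp (-δ * t) / δ) := by rw [hIexp t]
  -- identification of boundedSol with the helper
  have hbs : ∀ t : ℝ, boundedSol d c t = -(Real.exp (D t) * ∫ s in Set.Ioi t, h s) := by
    intro t
    unfold boundedSol
    congr 1
    rw [← MeasureTheory.integral_const_mul]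
    apply setIntegral_congr_fun measurableSet_Ioi
    intro s _
    show Real.exp (∫ l in s..t, d l) * c s = Real.exp (D t) * h s
    simp only [hhdef]
    rw [hDsub s t, ← mul_assoc, ← Real.exp_add]
    ring_nf
  -- part 1: integrability
  have part1 : ∀ t : ℝ, IntegrableOn (fun s => Real.exp (∫ l in s..t, d l) * c s)
      (Set.Ioi t) := by
    intro t
    have : Set.EqOn (fun s => Real.exp (∫ l in s..t, d l) * c s)
        (fun s => Real.exp (D t) * h s) (Set.Ioi t) := by
      intro s _
      show Real.exp (∫ l in s..t, d l) * c s = Real.exp (D t) * h s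
      simp only [hhdef]
      rw [hDsub s t, ← mul_assoc, ← Real.exp_add]
      ring_nf
    exact (IntegrableOn.congr_fun ((hhint t).const_mul (Real.exp (D t))) this.symm
      measurableSet_Ioi)
  -- part 2: boundedness
  have hbsbd : ∀ t : ℝ, |boundedSol d c t| ≤ C / δ := by
    intro t
    rw [hbs t, abs_neg, abs_mul, abs_of_pos (Real.exp_pos _)]
    calc Real.exp (D t) * |∫ s in Set.Ioi t, h s|
        ≤ Real.exp (D t) * (C * Real.exp (δ * t - D t) * (Real.exp (-δ * t) / δ)) := by
          apply mul_le_mul_of_nonneg_left (hFbd t) (le_of_lt (Real.exp_pos _))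
      _ = C / δ * (Real.exp (D t) * Real.exp (δ * t - D t) * Real.exp (-δ * t)) := by ring
      _ = C / δ := by
          rw [← Real.exp_add, ← Real.exp_add]
          ring_nf
          rw [Real.exp_zero, mul_one]
  have part2 : Bornology.IsBounded (Set.range (boundedSol d c)) := by
    apply isBounded_iff_forall_norm_le.2
    exact ⟨C / δ, by rintro _ ⟨t, rfl⟩; exact hbsbd t⟩
  -- splitting of the tail integral
  have hsplit : ∀ a b : ℝ, (∫ s in Set.Ioi a, h s) =
      (∫ s in a..b, h s) + ∫ s in Set.Ioi b, h s := by
    have key : ∀ a b : ℝ, a ≤ b → (∫ s in Set.Ioi a, h s) =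
        (∫ s in Set.Ioc a b, h s) + ∫ s in Set.Ioi b, h s := by
      intro a b hab
      rw [← Set.Ioc_union_Ioi_eq_Ioi hab]
      exact setIntegral_union Set.Ioc_disjoint_Ioi_same measurableSet_Ioi
        ((hhint a).mono_set Set.Ioc_subset_Ioi_self) (hhint b)
    intro a b
    rcases le_total a b with hab | hba
    · rw [key a b hab, intervalIntegral.integral_of_le hab]
    · have := key b a hba
      rw [intervalIntegral.integral_symm, intervalIntegral.integral_of_le hba]
      linarith
  -- part 3: derivative
  have hbs2 : boundedSol d c = fun u =>
      -(Real.exp (D u) * ((∫ s in Set.Ioi (0:ℝ), h s) - ∫ s in (0:ℝ)..u, h s)) := by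
    funext u
    rw [hbs u]
    congr 1
    have := hsplit 0 u
    have h2 : (∫ s in Set.Ioi u, h s) = (∫ s in Set.Ioi (0:ℝ), h s) - ∫ s in (0:ℝ)..u, h s := by
      linarith
    rw [h2]
  have part3 : ∀ t : ℝ, HasDerivAt (boundedSol d c) (d t * boundedSol d c t + c t) t := by
    intro t
    have hftc : HasDerivAt (fun u => ∫ s in (0:ℝ)..u, h s) (h t) t :=
      intervalIntegral.integral_hasDerivAt_right (hhcont.intervalIntegrable _ _)
        (hhcont.stronglyMeasurableAtFilter _ _) hhcont.continuousAt
    have hexpD : HasDerivAt (fun u => Real.exp (D u)) (Real.exp (D t) * d t) t := (hD t).exp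
    have hmain := ((hexpD.mul ((hasDerivAt_const t (∫ s in Set.Ioi (0:ℝ), h s)).sub hftc)).neg)
    rw [hbs2]
    refine hmain.congr_deriv ?_
    have hexp1 : Real.exp (D t) * Real.exp (-(D t)) = 1 := by
      rw [← Real.exp_add]; simp
    have hcval : Real.exp (D t) * h t = c t := by
      simp only [hhdef]
      rw [← mul_assoc, hexp1, one_mul]
    beta_reduce
    simp only [Pi.sub_apply]
    nlinarith [hcval]
  refine ⟨part1, part2, part3, ?_⟩
  -- part 4: uniqueness
  intro x hx hxb
  obtain ⟨Mx, hMx⟩ : ∃ M, ∀ s, |x s| ≤ M := by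
    obtain ⟨M, hM⟩ := isBounded_iff_forall_norm_le.1 hxb
    exact ⟨M, fun s => hM _ (Set.mem_range_self s)⟩
  set y : ℝ → ℝ := fun u => x u - boundedSol d c u with hydef
  have hy : ∀ u, HasDerivAt y (d u * y u) u := by
    intro u
    have := (hx u).sub (part3 u)
    refine this.congr_deriv ?_
    simp only [hydef]; ring
  have hyM : ∀ u, |y u| ≤ Mx + C / δ := by
    intro u
    simp only [hydef]
    calc |x u - boundedSol d c u| ≤ |x u| + |boundedSol d c u| := abs_sub _ _
      _ ≤ Mx + C / δ := add_le_add (hMx u) (hbsbd u)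
  set z : ℝ → ℝ := fun u => y u * Real.exp (-(D u)) with hzdef
  have hz : ∀ u, HasDerivAt z 0 u := by
    intro u
    have := (hy u).mul ((hD u).neg.exp)
    refine this.congr_deriv ?_
    ring
  have hzc : ∀ u, z u = z 0 :=
    fun u => is_const_of_deriv_eq_zero (fun v => (hz v).differentiableAt)
      (fun v => (hz v).deriv) u 0
  have hz0 : z 0 = y 0 := by simp [hzdef, hD0]
  have hyform : ∀ u, y u = y 0 * Real.exp (D u) := by
    intro u
    have h1 : y u * Real.exp (-(D u)) = y 0 := by rw [← hz0]; exact hzc u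
    have h2 : Real.exp (-(D u)) * Real.exp (D u) = 1 := by rw [← Real.exp_add]; simp
    calc y u = y u * (Real.exp (-(D u)) * Real.exp (D u)) := by rw [h2]; ring
      _ = (y u * Real.exp (-(D u))) * Real.exp (D u) := by ring
      _ = y 0 * Real.exp (D u) := by rw [h1]
  have hy0 : y 0 = 0 := by
    by_contra hne
    set M := Mx + C / δ with hMdef
    have hM0 : 0 ≤ M := le_trans (abs_nonneg _) (hyM 0)
    have hy0pos : 0 < |y 0| := abs_pos.2 hne
    set u := (M + 1) / (δ * |y 0|) with hudef
    have hupos : 0 < u := by positivity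
    have hDu : δ * u ≤ D u := by
      have := hDgrow 0 u (le_of_lt hupos)
      rw [hD0] at this; linarith
    have hexp : δ * u + 1 ≤ Real.exp (D u) := by
      have h1 : δ * u + 1 ≤ Real.exp (δ * u) := Real.add_one_le_exp _
      exact le_trans h1 (Real.exp_le_exp.2 hDu)
    have hval : |y u| = |y 0| * Real.exp (D u) := by
      rw [hyform u, abs_mul, abs_of_pos (Real.exp_pos _)]
    have hbig : M + 1 ≤ |y u| := by
      rw [hval]
      have h2 : |y 0| * (δ * u + 1) ≤ |y 0| * Real.exp (D u) :=
        mul_le_mul_of_nonneg_left hexp (abs_nonneg _)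
      have h3 : |y 0| * (δ * u) = M + 1 := by
        rw [hudef]; field_simp
      nlinarith
    have := hyM u
    linarith
  funext u
  have : y u = 0 := by rw [hyform u, hy0, zero_mul]
  have := sub_eq_zero.1 this
  exact this
end

section
/- Let d : ℝ → ℝ be continuous with d(t) ≥ δ > 0, let c : ℝ → ℝ be continuous and bounded, and let b be the unique bounded solution of x' = d(t)x + c(t). Then every solution x of this equation satisfies x(t) = exp(∫_{t₀}^t d(s) ds)·(x(t₀) - b(t₀)) + b(t). Consequently x(t) → +∞ as t → ∞ if and only if x(t₀) > b(t₀), and x(t) → -∞ as t → ∞ if and only if x(t₀) < b(t₀). -/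
set_option maxHeartbeats 1000000


open Filter

theorem stmt2 (d c : ℝ → ℝ) (hd : Continuous d) (hc : Continuous c)
    (hcb : Bornology.IsBounded (Set.range c))
    (δ : ℝ) (hδ : 0 < δ) (hlow : ∀ t, δ ≤ d t)
    (b : ℝ → ℝ) (hb : ∀ t : ℝ, HasDerivAt b (d t * b t + c t) t)
    (hbb : Bornology.IsBounded (Set.range b))
    (x : ℝ → ℝ) (hx : ∀ t : ℝ, HasDerivAt x (d t * x t + c t) t) (t₀ : ℝ) :
    (∀ t : ℝ, x t = Real.exp (∫ s in t₀..t, d s) * (x t₀ - b t₀) + b t) ∧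
    (Tendsto x atTop atTop ↔ b t₀ < x t₀) ∧
    (Tendsto x atTop atBot ↔ x t₀ < b t₀) := by
  set I : ℝ → ℝ := fun t => ∫ s in t₀..t, d s with hI
  have hIderiv : ∀ t, HasDerivAt I (d t) t := fun t =>
    intervalIntegral.integral_hasDerivAt_right (hd.intervalIntegrable _ _)
      (hd.stronglyMeasurableAtFilter _ _) hd.continuousAt
  set g : ℝ → ℝ := fun t => (x t - b t) * Real.exp (-(I t)) with hg
  have hgderiv : ∀ t, HasDerivAt g 0 t := by
    intro t
    have h1 : HasDerivAt (fun t => x t - b t) (d t * (x t - b t)) t := by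
      have := (hx t).sub (hb t)
      exact this.congr_deriv (by ring)
    have h2 : HasDerivAt (fun t => Real.exp (-(I t))) (-(d t) * Real.exp (-(I t))) t := by
      have := (Real.hasDerivAt_exp (-(I t))).comp t ((hIderiv t).neg)
      exact this.congr_deriv (by ring)
    have := h1.mul h2
    exact this.congr_deriv (by ring)
  have hgconst : ∀ t, g t = x t₀ - b t₀ := by
    have hc' : ∀ t, g t = g t₀ := by
      intro t
      have : ∀ s, deriv g s = 0 := fun s => (hgderiv s).deriv
      exact is_const_of_deriv_eq_zero (fun s => (hgderiv s).differentiableAt) this t t₀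
    intro t
    rw [hc' t]
    simp [hg, hI, intervalIntegral.integral_same]
  have key : ∀ t : ℝ, x t = Real.exp (I t) * (x t₀ - b t₀) + b t := by
    intro t
    have h := hgconst t
    have hexp : Real.exp (-(I t)) ≠ 0 := Real.exp_ne_zero _
    have : x t - b t = Real.exp (I t) * (x t₀ - b t₀) := by
      rw [← h, hg]
      simp only []
      rw [mul_comm (x t - b t), ← mul_assoc, ← Real.exp_add]
      simp
    linarith [this]
  obtain ⟨M, hM⟩ := hbb.exists_norm_le
  have hMb : ∀ t, |b t| ≤ M := fun t => hM _ (Set.mem_range_self t)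
  have hEinf : Tendsto (fun t => Real.exp (I t)) atTop atTop := by
    apply Real.tendsto_exp_atTop.comp
    have hbase : Tendsto (fun t => δ * (t - t₀)) atTop atTop :=
      Tendsto.const_mul_atTop hδ (tendsto_atTop_add_const_right atTop (-t₀) tendsto_id)
    apply tendsto_atTop_mono' atTop ?_ hbase
    · filter_upwards [eventually_ge_atTop t₀] with t ht
      have h1 : (∫ s in t₀..t, (δ : ℝ)) ≤ ∫ s in t₀..t, d s := by
        apply intervalIntegral.integral_mono_on ht intervalIntegrable_const
          (hd.intervalIntegrable _ _)
        intro s _; exact hlow s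
      have h2 : (∫ s in t₀..t, (δ : ℝ)) = δ * (t - t₀) := by
        rw [intervalIntegral.integral_const]; ring_nf
      simpa [hI, h2] using h1
  refine ⟨key, ?_, ?_⟩
  · constructor
    · intro h
      by_contra hle
      push_neg at hle
      have hub : ∀ t, x t ≤ M := by
        intro t
        have := key t
        have h1 : Real.exp (I t) * (x t₀ - b t₀) ≤ 0 :=
          mul_nonpos_of_nonneg_of_nonpos (Real.exp_pos _).le (by linarith)
        have h2 := (abs_le.mp (hMb t)).2
        linarith
      obtain ⟨t, ht⟩ := (h.eventually (eventually_ge_atTop (M + 1))).exists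
      linarith [hub t]
    · intro hC
      apply tendsto_atTop_mono (fun t => ?_)
        (tendsto_atTop_add_const_right atTop (-M)
          (hEinf.atTop_mul_const (sub_pos.mpr hC)))
      have h2 := (abs_le.mp (hMb t)).1
      have := key t
      linarith
  · constructor
    · intro h
      by_contra hle
      push_neg at hle
      have hub : ∀ t, -M ≤ x t := by
        intro t
        have := key t
        have h1 : 0 ≤ Real.exp (I t) * (x t₀ - b t₀) :=
          mul_nonneg (Real.exp_pos _).le (by linarith)
        have h2 := (abs_le.mp (hMb t)).1
        linarith
      obtain ⟨t, ht⟩ := (h.eventually (eventually_le_atBot (-M - 1))).exists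
      linarith [hub t]
    · intro hC
      have h0 : Tendsto (fun t => Real.exp (I t) * (x t₀ - b t₀)) atTop atBot :=
        hEinf.atTop_mul_const_of_neg (sub_neg.mpr hC)
      have h1 : Tendsto (fun t => Real.exp (I t) * (x t₀ - b t₀) + M) atTop atBot :=
        tendsto_atBot_add_const_right atTop M h0
      apply tendsto_atBot_mono (fun t => ?_) h1
      have h2 := (abs_le.mp (hMb t)).2
      have := key t
      linarith
end

section
/- Let d, c : ℝ → ℝ be continuous and bounded with δ ≤ d(t) ≤ M for some 0 < δ ≤ M, and for λ ∈ ℝ let b_λ denote the unique bounded solution of x' = d(t)x + c(t) + λ. Then b_λ(t) = b_0(t) - λ·B(t), where B(t) := ∫_t^∞ exp(∫_s^t d(l) dl) ds satisfies 1/M ≤ B(t) ≤ 1/δ for all t. In particular, for λ₁ < λ₂ one has b_{λ₂}(t) ≤ b_{λ₁}(t) - (λ₂-λ₁)/M for all t, and b_λ(t) → ∓∞ uniformly in t as λ → ±∞. -/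
open MeasureTheory

open Set Filter intervalIntegral Real Topology in
private theorem expInt (t k : ℝ) (hk : 0 < k) :
    ∫ s in Ioi t, Real.exp (-(k*(s-t))) = 1/k := by
  have hder : ∀ x ∈ Ioi t, HasDerivAt (fun s => Real.exp (-(k*(s-t))) * (-1/k))
      (Real.exp (-(k*(x-t)))) x := by
    intro x _
    have h1 : HasDerivAt (fun s : ℝ => -(k*(s-t))) (-k) x := by
      simpa using (((hasDerivAt_id x).sub_const t).const_mul k).fun_neg
    have h2 := (h1.exp).mul_const (-1/k)
    refine h2.congr_deriv ?_
    field_simp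
  have hint : IntegrableOn (fun s => Real.exp (-(k*(s-t)))) (Ioi t) := by
    have h := (exp_neg_integrableOn_Ioi t hk).const_mul (Real.exp (k*t))
    have : (fun s => Real.exp (-(k*(s-t)))) = fun s => Real.exp (k*t) * Real.exp (-k*s) := by
      funext s; rw [← Real.exp_add]; ring_nf
    rwa [this]
  have htend : Tendsto (fun s => Real.exp (-(k*(s-t))) * (-1/k)) atTop (𝓝 0) := by
    have h1 : Tendsto (fun s : ℝ => -(k*(s-t))) atTop atBot := by
      apply Filter.tendsto_neg_atBot_iff.mpr
      have : Tendsto (fun s : ℝ => k*(s-t)) atTop atTop := by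
        apply Tendsto.const_mul_atTop hk
        exact tendsto_atTop_add_const_right _ (-t) tendsto_id |>.congr
          (fun s => by simp only [id_eq]; ring)
      exact this
    have h2 := Real.tendsto_exp_atBot.comp h1
    simpa using h2.mul_const (-1/k)
  have hcont : ContinuousWithinAt (fun s => Real.exp (-(k*(s-t))) * (-1/k)) (Ici t) t :=
    (Continuous.continuousWithinAt (by continuity))
  have := integral_Ioi_of_hasDerivAt_of_tendsto hcont hder hint htend
  rw [this]
  simp
  field_simp

section Aux
open Set Filter intervalIntegral Real Topology

variable (d : ℝ → ℝ) (hd : Continuous d) (δ M : ℝ) (hδ : 0 < δ) (hδM : δ ≤ M)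
  (hlow : ∀ t, δ ≤ d t) (hupp : ∀ t, d t ≤ M)

include hd hlow in
private theorem intLow {t s : ℝ} (h : t ≤ s) : δ * (s - t) ≤ ∫ l in t..s, d l := by
  have := intervalIntegral.integral_mono_on h
    (_root_.intervalIntegrable_const (c := δ) (μ := volume))
    (hd.intervalIntegrable t s) (fun x _ => hlow x)
  simpa [mul_comm] using this

include hd hupp in
private theorem intUpp {t s : ℝ} (h : t ≤ s) : ∫ l in t..s, d l ≤ M * (s - t) := by
  have := intervalIntegral.integral_mono_on h (hd.intervalIntegrable t s)
    (_root_.intervalIntegrable_const (c := M) (μ := volume)) (fun x _ => hupp x)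
  simpa [mul_comm] using this

include hd hδ hlow in
private theorem gInt (t : ℝ) :
    IntegrableOn (fun s => Real.exp (∫ l in s..t, d l)) (Ioi t) := by
  have hcont : Continuous (fun s => Real.exp (∫ l in s..t, d l)) := by
    apply Real.continuous_exp.comp
    have : Continuous (fun s => ∫ l in t..s, d l) :=
      intervalIntegral.continuous_primitive (fun a b => hd.intervalIntegrable a b) t
    have h2 := this.neg
    convert h2 using 1
    funext s; rw [intervalIntegral.integral_symm]; rfl
  apply Integrable.mono' ((exp_neg_integrableOn_Ioi t hδ).const_mul (Real.exp (δ*t)))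
    hcont.aestronglyMeasurable
  filter_upwards [ae_restrict_mem measurableSet_Ioi] with s hs
  rw [norm_eq_abs, abs_of_pos (Real.exp_pos _)]
  rw [show Real.exp (δ*t) * Real.exp (-δ*s) = Real.exp (-(δ*(s-t))) by
    rw [← Real.exp_add]; ring_nf]
  apply Real.exp_le_exp.mpr
  rw [intervalIntegral.integral_symm]
  have := intLow d hd δ hlow (le_of_lt hs)
  linarith

include hd hδ hδM hlow hupp in
private theorem Bbounds (t : ℝ) : 1/M ≤ (∫ s in Ioi t, Real.exp (∫ l in s..t, d l)) ∧
    (∫ s in Ioi t, Real.exp (∫ l in s..t, d l)) ≤ 1/δ := by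
  have hM : 0 < M := lt_of_lt_of_le hδ hδM
  have hgi := gInt d hd δ hδ hlow t
  constructor
  · rw [← expInt t M hM]
    have hMi : IntegrableOn (fun s => Real.exp (-(M*(s-t)))) (Ioi t) := by
      have h := (exp_neg_integrableOn_Ioi t hM).const_mul (Real.exp (M*t))
      have : (fun s => Real.exp (-(M*(s-t)))) = fun s => Real.exp (M*t) * Real.exp (-M*s) := by
        funext s; rw [← Real.exp_add]; ring_nf
      rwa [this]
    apply setIntegral_mono_on hMi hgi measurableSet_Ioi
    intro s hs
    apply Real.exp_le_exp.mpr
    rw [intervalIntegral.integral_symm]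
    have := intUpp d hd M hupp (le_of_lt hs)
    linarith
  · rw [← expInt t δ hδ]
    have hdi : IntegrableOn (fun s => Real.exp (-(δ*(s-t)))) (Ioi t) := by
      have h := (exp_neg_integrableOn_Ioi t hδ).const_mul (Real.exp (δ*t))
      have : (fun s => Real.exp (-(δ*(s-t)))) = fun s => Real.exp (δ*t) * Real.exp (-δ*s) := by
        funext s; rw [← Real.exp_add]; ring_nf
      rwa [this]
    apply setIntegral_mono_on hgi hdi measurableSet_Ioi
    intro s hs
    apply Real.exp_le_exp.mpr
    rw [intervalIntegral.integral_symm]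
    have := intLow d hd δ hlow (le_of_lt hs)
    linarith

include hd hδ hlow in
private theorem keyrep (y : ℝ → ℝ) (lam : ℝ)
    (hy : ∀ s, HasDerivAt y (d s * y s + lam) s)
    (K : ℝ) (hK : ∀ s, |y s| ≤ K) (t : ℝ) :
    y t = -lam * ∫ s in Ioi t, Real.exp (∫ l in s..t, d l) := by
  set I : ℝ → ℝ := fun s => ∫ l in (0:ℝ)..s, d l with hIdef
  have hI : ∀ s, HasDerivAt I (d s) s := fun s => (hd.integral_hasStrictDerivAt 0 s).hasDerivAt
  have hIcont : Continuous I :=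
    intervalIntegral.continuous_primitive (fun a b => hd.intervalIntegrable a b) 0
  have hconv : ∀ s, Real.exp (-(I s)) * Real.exp (I t) = Real.exp (∫ l in s..t, d l) := by
    intro s
    rw [← Real.exp_add]
    congr 1
    have hadj := intervalIntegral.integral_add_adjacent_intervals (μ := volume)
      (hd.intervalIntegrable s 0) (hd.intervalIntegrable 0 t)
    rw [← hadj, intervalIntegral.integral_symm]
  have hF : ∀ s, HasDerivAt (fun u => y u * Real.exp (-(I u)))
      (lam * Real.exp (-(I s))) s := by
    intro s
    have hE : HasDerivAt (fun u => Real.exp (-(I u))) (Real.exp (-(I s)) * (-(d s))) s :=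
      (hI s).neg.exp
    have := (hy s).fun_mul hE
    refine this.congr_deriv ?_
    ring
  have key : ∀ T : ℝ, y t = y T * Real.exp (∫ l in T..t, d l)
      - lam * ∫ s in t..T, Real.exp (∫ l in s..t, d l) := by
    intro T
    have ftc : (∫ s in t..T, lam * Real.exp (-(I s)))
        = y T * Real.exp (-(I T)) - y t * Real.exp (-(I t)) := by
      apply intervalIntegral.integral_eq_sub_of_hasDerivAt (fun s _ => hF s)
      exact (Continuous.intervalIntegrable (by continuity) t T)
    have e1 : (∫ s in t..T, lam * Real.exp (-(I s))) * Real.exp (I t)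
        = lam * ∫ s in t..T, Real.exp (∫ l in s..t, d l) := by
      rw [← intervalIntegral.integral_mul_const, ← intervalIntegral.integral_const_mul]
      apply intervalIntegral.integral_congr
      intro s _
      show lam * Real.exp (-(I s)) * Real.exp (I t) = lam * Real.exp (∫ l in s..t, d l)
      rw [← hconv s]
      ring
    rw [ftc] at e1
    rw [sub_mul, mul_assoc, mul_assoc, hconv T, hconv t] at e1
    have h0 : Real.exp (∫ l in t..t, d l) = 1 := by simp
    rw [h0, mul_one] at e1
    linarith
  have htend1 : Tendsto (fun T => y T * Real.exp (∫ l in T..t, d l)) atTop (𝓝 0) := by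
    apply squeeze_zero_norm' (a := fun T => K * Real.exp (-(δ*(T-t))))
    · filter_upwards [eventually_ge_atTop t] with T hT
      rw [norm_eq_abs, abs_mul, abs_of_pos (Real.exp_pos _)]
      have hexp : Real.exp (∫ l in T..t, d l) ≤ Real.exp (-(δ*(T-t))) := by
        apply Real.exp_le_exp.mpr
        rw [intervalIntegral.integral_symm]
        have := intLow d hd δ hlow hT
        linarith
      exact mul_le_mul (hK T) hexp (Real.exp_pos _).le
        (le_trans (abs_nonneg _) (hK t))
    · have h1 : Tendsto (fun T : ℝ => -(δ*(T-t))) atTop atBot := by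
        apply Filter.tendsto_neg_atBot_iff.mpr
        apply Tendsto.const_mul_atTop hδ
        exact tendsto_atTop_add_const_right _ (-t) tendsto_id |>.congr
          (fun s => by simp only [id_eq]; ring)
      have h2 := Real.tendsto_exp_atBot.comp h1
      simpa using h2.const_mul K
  have htend2 : Tendsto (fun T => lam * ∫ s in t..T, Real.exp (∫ l in s..t, d l)) atTop
      (𝓝 (lam * ∫ s in Ioi t, Real.exp (∫ l in s..t, d l))) :=
    (intervalIntegral_tendsto_integral_Ioi t (gInt d hd δ hδ hlow t) tendsto_id).const_mul lam
  have htend : Tendsto (fun T => y T * Real.exp (∫ l in T..t, d l)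
      - lam * ∫ s in t..T, Real.exp (∫ l in s..t, d l)) atTop
      (𝓝 (0 - lam * ∫ s in Ioi t, Real.exp (∫ l in s..t, d l))) := htend1.sub htend2
  have hconst : Tendsto (fun T => y T * Real.exp (∫ l in T..t, d l)
      - lam * ∫ s in t..T, Real.exp (∫ l in s..t, d l)) atTop (𝓝 (y t)) :=
    tendsto_const_nhds.congr (fun T => key T)
  have := tendsto_nhds_unique hconst htend
  linarith

end Aux

theorem stmt3 (d c : ℝ → ℝ) (hd : Continuous d) (hc : Continuous c)
    (hcb : Bornology.IsBounded (Set.range c))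
    (δ M : ℝ) (hδ : 0 < δ) (hδM : δ ≤ M)
    (hlow : ∀ t, δ ≤ d t) (hupp : ∀ t, d t ≤ M)
    (b : ℝ → ℝ → ℝ)
    (hbsol : ∀ lam : ℝ, ∀ t : ℝ, HasDerivAt (b lam) (d t * b lam t + c t + lam) t)
    (hbbd : ∀ lam : ℝ, Bornology.IsBounded (Set.range (b lam))) :
    let B : ℝ → ℝ := fun t => ∫ s in Set.Ioi t, Real.exp (∫ l in s..t, d l)
    (∀ t : ℝ, 1 / M ≤ B t ∧ B t ≤ 1 / δ) ∧
    (∀ lam t : ℝ, b lam t = b 0 t - lam * B t) ∧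
    (∀ lam₁ lam₂ : ℝ, lam₁ < lam₂ →
      ∀ t : ℝ, b lam₂ t ≤ b lam₁ t - (lam₂ - lam₁) / M) ∧
    (∀ C : ℝ, ∃ Λ : ℝ, ∀ lam : ℝ, Λ ≤ lam → ∀ t : ℝ, b lam t ≤ C) ∧
    (∀ C : ℝ, ∃ Λ : ℝ, ∀ lam : ℝ, lam ≤ Λ → ∀ t : ℝ, C ≤ b lam t) := by
  intro B
  have hM : 0 < M := lt_of_lt_of_le hδ hδM
  have hBb : ∀ t, 1/M ≤ B t ∧ B t ≤ 1/δ := fun t => Bbounds d hd δ M hδ hδM hlow hupp t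
  have hrep : ∀ lam t, b lam t = b 0 t - lam * B t := by
    intro lam t
    obtain ⟨r1, hr1⟩ := (hbbd lam).exists_norm_le
    obtain ⟨r0, hr0⟩ := (hbbd 0).exists_norm_le
    have hy : ∀ s, HasDerivAt (fun u => b lam u - b 0 u)
        (d s * (b lam s - b 0 s) + lam) s := by
      intro s
      have := (hbsol lam s).fun_sub (hbsol 0 s)
      refine this.congr_deriv ?_
      ring
    have hKb : ∀ s, |b lam s - b 0 s| ≤ r1 + r0 := by
      intro s
      refine (abs_sub _ _).trans (add_le_add ?_ ?_)
      · exact hr1 _ (Set.mem_range_self s)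
      · exact hr0 _ (Set.mem_range_self s)
    have := keyrep d hd δ hδ hlow (fun u => b lam u - b 0 u) lam hy (r1 + r0) hKb t
    linarith
  refine ⟨hBb, hrep, ?_, ?_, ?_⟩
  · intro lam₁ lam₂ h t
    have hB := (hBb t).1
    rw [hrep lam₁ t, hrep lam₂ t]
    have h2 : (lam₂ - lam₁) * (1/M) ≤ (lam₂ - lam₁) * B t :=
      mul_le_mul_of_nonneg_left hB (by linarith)
    rw [mul_one_div] at h2
    linarith
  · intro C
    obtain ⟨K, hK⟩ := (hbbd 0).exists_norm_le
    refine ⟨max 0 (M*(K - C)), fun lam hlam t => ?_⟩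
    have hB := (hBb t).1
    have hlam0 : 0 ≤ lam := le_trans (le_max_left _ _) hlam
    have h1 : lam * (1/M) ≤ lam * B t := mul_le_mul_of_nonneg_left hB hlam0
    rw [mul_one_div] at h1
    have h2 : M*(K - C) ≤ lam := le_trans (le_max_right _ _) hlam
    have h4 : K - C ≤ lam / M := (le_div_iff₀ hM).mpr (by linarith)
    have h3 : b 0 t ≤ K := (abs_le.mp (hK _ (Set.mem_range_self t))).2
    rw [hrep lam t]
    linarith
  · intro C
    obtain ⟨K, hK⟩ := (hbbd 0).exists_norm_le
    refine ⟨min 0 (-(M*(C + K))), fun lam hlam t => ?_⟩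
    have hB := (hBb t).1
    have hlam0 : 0 ≤ -lam := by
      have := le_trans hlam (min_le_left _ _)
      linarith
    have h1 : (-lam) * (1/M) ≤ (-lam) * B t := mul_le_mul_of_nonneg_left hB hlam0
    rw [mul_one_div] at h1
    have h2 : lam ≤ -(M*(C + K)) := le_trans hlam (min_le_right _ _)
    have h4 : C + K ≤ (-lam) / M := (le_div_iff₀ hM).mpr (by linarith)
    have h3 : -K ≤ b 0 t := (abs_le.mp (hK _ (Set.mem_range_self t))).1
    rw [hrep lam t]
    linarith
end

section
/- Let g : ℝ → ℝ be C¹ with g(0) = g'(0) = 0, concave on [0,∞) and convex on (-∞,0]. Define g⁻(x) := min(g(x), 0) and g⁺(x) := max(g(x), 0). Then g⁻(x) = g(x) for x ≥ 0 and g⁻(x) = 0 for x ≤ 0, g⁺(x) = g(x) for x ≤ 0 and g⁺(x) = 0 for x ≥ 0, g = g⁻ + g⁺, g⁻ is concave on ℝ, and g⁺ is convex on ℝ. -/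
open Set

private lemma aux_key {g : ℝ → ℝ} (hg0 : g 0 = 0) (hconc : ConcaveOn ℝ (Set.Ici 0) g)
    (hneg : ∀ x : ℝ, 0 ≤ x → g x ≤ 0) (hpos : ∀ x : ℝ, x ≤ 0 → 0 ≤ g x)
    {x y a b : ℝ} (hxy : x ≤ y) (ha : 0 ≤ a) (hb : 0 ≤ b) (hab : a + b = 1) :
    a * min (g x) 0 + b * min (g y) 0 ≤ min (g (a * x + b * y)) 0 := by
  rcases le_or_gt y 0 with hy | hy
  · have hx : x ≤ 0 := hxy.trans hy
    have hz : a * x + b * y ≤ 0 := by nlinarith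
    rw [min_eq_right (hpos x hx), min_eq_right (hpos y hy),
      min_eq_right (hpos _ hz)]
    simp
  rcases le_or_gt 0 x with hx | hx
  · have hz : (0:ℝ) ≤ a * x + b * y := by positivity
    rw [min_eq_left (hneg x hx), min_eq_left (hneg y hy.le)]
    refine le_min ?_ (by nlinarith [hneg x hx, hneg y hy.le])
    have := hconc.2 (by exact hx : x ∈ Set.Ici (0:ℝ)) (by exact hy.le : y ∈ Set.Ici (0:ℝ)) ha hb hab
    simpa using this
  · -- x < 0 < y
    rw [min_eq_right (hpos x hx.le), min_eq_left (hneg y hy.le)]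
    have hgy : g y ≤ 0 := hneg y hy.le
    set z := a * x + b * y with hzdef
    rcases le_or_gt z 0 with hz | hz
    · rw [min_eq_right (hpos z hz)]
      nlinarith
    · rw [min_eq_left (hneg z hz.le)]
      set s := z / y with hsdef
      have hs0 : 0 ≤ s := div_nonneg hz.le hy.le
      have hzby : z ≤ b * y := by nlinarith
      have hs1 : s ≤ 1 := by
        rw [div_le_one hy]
        nlinarith
      have hsb : s ≤ b := by
        rw [hsdef, div_le_iff₀ hy]
        linarith
      have hcc := hconc.2 (le_refl (0:ℝ) : (0:ℝ) ∈ Set.Ici (0:ℝ))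
        (hy.le : y ∈ Set.Ici (0:ℝ)) (by linarith : (0:ℝ) ≤ 1 - s) hs0 (by ring)
      have hsy : s * y = z := div_mul_cancel₀ z hy.ne'
      simp only [smul_eq_mul, mul_zero, zero_add, hsy] at hcc
      rw [hg0] at hcc
      nlinarith

private lemma aux_conc {g : ℝ → ℝ} (hg0 : g 0 = 0) (hconc : ConcaveOn ℝ (Set.Ici 0) g)
    (hneg : ∀ x : ℝ, 0 ≤ x → g x ≤ 0) (hpos : ∀ x : ℝ, x ≤ 0 → 0 ≤ g x) :
    ConcaveOn ℝ Set.univ (fun x => min (g x) 0) := by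
  refine ⟨convex_univ, ?_⟩
  intro x _ y _ a b ha hb hab
  simp only [smul_eq_mul]
  rcases le_total x y with h | h
  · exact aux_key hg0 hconc hneg hpos h ha hb hab
  · have := aux_key hg0 hconc hneg hpos h hb ha (by linarith)
    calc a * min (g x) 0 + b * min (g y) 0
        = b * min (g y) 0 + a * min (g x) 0 := by ring
      _ ≤ min (g (b * y + a * x)) 0 := this
      _ = min (g (a * x + b * y)) 0 := by rw [add_comm]

theorem stmt6 (g : ℝ → ℝ) (hg : ContDiff ℝ 1 g) (h0 : g 0 = 0) (h0' : deriv g 0 = 0)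
    (hconc : ConcaveOn ℝ (Set.Ici 0) g) (hconv : ConvexOn ℝ (Set.Iic 0) g) :
    let gm : ℝ → ℝ := fun x => min (g x) 0
    let gp : ℝ → ℝ := fun x => max (g x) 0
    (∀ x : ℝ, 0 ≤ x → gm x = g x) ∧ (∀ x : ℝ, x ≤ 0 → gm x = 0) ∧
    (∀ x : ℝ, x ≤ 0 → gp x = g x) ∧ (∀ x : ℝ, 0 ≤ x → gp x = 0) ∧
    g = gm + gp ∧
    ConcaveOn ℝ Set.univ gm ∧ ConvexOn ℝ Set.univ gp := by
  intro gm gp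
  have hdiff : ∀ x : ℝ, DifferentiableAt ℝ g x := fun x =>
    (hg.differentiable one_ne_zero).differentiableAt
  -- g ≤ 0 on [0, ∞)
  have hneg : ∀ x : ℝ, 0 ≤ x → g x ≤ 0 := by
    intro x hx
    rcases eq_or_lt_of_le hx with rfl | hx'
    · exact h0.le
    · have := hconc.slope_le_deriv (le_refl (0:ℝ) : (0:ℝ) ∈ Set.Ici 0)
        (hx : x ∈ Set.Ici 0) hx' (hdiff 0)
      rw [h0', slope_def_field, h0] at this
      have hx0 : (0:ℝ) < x - 0 := by linarith
      rw [div_le_iff₀ (by linarith : (0:ℝ) < x - 0)] at this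
      linarith
  -- g ≥ 0 on (-∞, 0]
  have hpos : ∀ x : ℝ, x ≤ 0 → 0 ≤ g x := by
    intro x hx
    rcases eq_or_lt_of_le hx with rfl | hx'
    · exact h0.ge
    · have := hconv.slope_le_deriv (hx : x ∈ Set.Iic 0)
        (le_refl (0:ℝ) : (0:ℝ) ∈ Set.Iic 0) hx' (hdiff 0)
      rw [h0', slope_def_field, h0] at this
      rw [div_le_iff₀ (by linarith : (0:ℝ) < 0 - x)] at this
      linarith
  -- reflected function
  set g2 : ℝ → ℝ := fun x => -g (-x) with hg2
  have hconc2 : ConcaveOn ℝ (Set.Ici 0) g2 := by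
    refine ⟨convex_Ici 0, ?_⟩
    intro x hx y hy a b ha hb hab
    have hx' : -x ∈ Set.Iic (0:ℝ) := by simpa using hx
    have hy' : -y ∈ Set.Iic (0:ℝ) := by simpa using hy
    have := hconv.2 hx' hy' ha hb hab
    simp only [hg2, smul_eq_mul] at *
    have heq : -(a * x + b * y) = a * -x + b * -y := by ring
    rw [heq]
    linarith
  have hneg2 : ∀ x : ℝ, 0 ≤ x → g2 x ≤ 0 := fun x hx => by
    simpa [hg2] using hpos (-x) (by linarith)
  have hpos2 : ∀ x : ℝ, x ≤ 0 → 0 ≤ g2 x := fun x hx => by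
    simpa [hg2] using hneg (-x) (by linarith)
  have hm2 : ConcaveOn ℝ Set.univ (fun x => min (g2 x) 0) :=
    aux_conc (by simp [hg2, h0]) hconc2 hneg2 hpos2
  -- compose with negation
  have hm2neg : ConcaveOn ℝ Set.univ (fun x => min (g2 (-x)) 0) := by
    refine ⟨convex_univ, ?_⟩
    intro x _ y _ a b ha hb hab
    have := hm2.2 (mem_univ (-x)) (mem_univ (-y)) ha hb hab
    simp only [smul_eq_mul] at *
    have heq : -(a * x + b * y) = a * -x + b * -y := by ring
    rw [heq]
    linarith
  have hgp_eq : gp = fun x => -(min (g2 (-x)) 0) := by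
    funext x
    simp only [gp, hg2, neg_neg]
    rw [← neg_zero, min_neg_neg, neg_neg, neg_zero]
  refine ⟨fun x hx => min_eq_left (hneg x hx), fun x hx => min_eq_right (hpos x hx),
    fun x hx => max_eq_left (hpos x hx), fun x hx => max_eq_right (hneg x hx),
    ?_, aux_conc h0 hconc hneg hpos, ?_⟩
  · funext x
    simp only [Pi.add_apply, gm, gp]
    rcases le_total (g x) 0 with h | h
    · rw [min_eq_left h, max_eq_right h, add_zero]
    · rw [min_eq_right h, max_eq_left h, zero_add]
  · rw [hgp_eq]
    exact hm2neg.neg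
end

section
/- Let d > 0 and let g : ℝ → ℝ be C¹ with g(0) = g'(0) = 0, g' strictly decreasing on [0,∞), g' strictly increasing on (-∞,0], and lim_{x→±∞}(d·x + g(x)) = ∓∞. Set F(x) := d·x + g(x). Then F has exactly one local maximum point x₊ > 0 and exactly one local minimum point x₋ < 0, with F(x₋) < 0 < F(x₊). Setting λ₋ := -F(x₊) and λ⁺ := -F(x₋), one has λ₋ < 0 < λ⁺, and the equation F(x) + λ = 0 has exactly three solutions for λ ∈ (λ₋, λ⁺), exactly two solutions for λ ∈ {λ₋, λ⁺}, and exactly one solution for λ ∉ [λ₋, λ⁺]. -/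
open Filter

theorem stmt10 (d : ℝ) (hd : 0 < d) (g : ℝ → ℝ) (hg : ContDiff ℝ 1 g)
    (h0 : g 0 = 0) (h0' : deriv g 0 = 0)
    (hanti : StrictAntiOn (deriv g) (Set.Ici 0))
    (hmono : StrictMonoOn (deriv g) (Set.Iic 0))
    (hcoer₁ : Tendsto (fun x => d * x + g x) atTop atBot)
    (hcoer₂ : Tendsto (fun x => d * x + g x) atBot atTop) :
    let F : ℝ → ℝ := fun x => d * x + g x
    ∃ xp xm : ℝ, 0 < xp ∧ xm < 0 ∧
      IsLocalMax F xp ∧ (∀ x : ℝ, IsLocalMax F x → x = xp) ∧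
      IsLocalMin F xm ∧ (∀ x : ℝ, IsLocalMin F x → x = xm) ∧
      F xm < 0 ∧ 0 < F xp ∧
      (let lamm : ℝ := -F xp
       let lamp : ℝ := -F xm
       lamm < 0 ∧ 0 < lamp ∧
       ∀ lam : ℝ,
         (lam ∈ Set.Ioo lamm lamp → {x : ℝ | F x + lam = 0}.encard = 3) ∧
         (lam = lamm ∨ lam = lamp → {x : ℝ | F x + lam = 0}.encard = 2) ∧
         (lam ∉ Set.Icc lamm lamp → {x : ℝ | F x + lam = 0}.encard = 1)) := by
  intro F
  have hFdef : F = fun x => d * x + g x := rfl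
  set φ : ℝ → ℝ := fun x => d + deriv g x with hφdef
  have hg' : Differentiable ℝ g := hg.differentiable one_ne_zero
  have hDF : ∀ x, HasDerivAt F (φ x) x := by
    intro x
    have h1 : HasDerivAt (fun y : ℝ => d * y) d x := by
      simpa using (hasDerivAt_id x).const_mul d
    exact h1.add (hg' x).hasDerivAt
  have Fc : Continuous F := by
    rw [hFdef]; exact (continuous_const.mul continuous_id).add hg.continuous
  have φcont : Continuous φ := continuous_const.add (hg.continuous_deriv le_rfl)
  have φ0 : φ 0 = d := by simp [hφdef, h0']
  have φanti : StrictAntiOn φ (Set.Ici 0) := fun a ha b hb hab =>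
    add_lt_add_right (hanti ha hb hab) d
  have φmono : StrictMonoOn φ (Set.Iic 0) := fun a ha b hb hab =>
    add_lt_add_right (hmono ha hb hab) d
  have hF0 : F 0 = 0 := by simp [hFdef, h0]
  have hcF : Tendsto F atTop atBot := hcoer₁
  have hcF2 : Tendsto F atBot atTop := hcoer₂
  have derivF : ∀ x, deriv F x = φ x := fun x => (hDF x).deriv
  -- existence of positive critical point
  have hexP : ∃ y, 0 < y ∧ φ y ≤ 0 := by
    by_contra h
    push_neg at h
    have mono : StrictMonoOn F (Set.Ici 0) := by
      apply strictMonoOn_of_deriv_pos (convex_Ici 0) Fc.continuousOn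
      intro x hx
      rw [interior_Ici] at hx
      rw [derivF]
      exact h x hx
    obtain ⟨x, hx1, hx2⟩ :=
      ((hcF.eventually (eventually_lt_atBot (-1))).and (eventually_ge_atTop (1:ℝ))).exists
    have h2 : F 0 ≤ F x := mono.monotoneOn (Set.self_mem_Ici) (by simp; linarith) (by linarith)
    rw [hF0] at h2
    linarith
  obtain ⟨y, hy, hyle⟩ := hexP
  obtain ⟨p, hpmem, hφp⟩ :=
    intermediate_value_Icc' hy.le φcont.continuousOn
      (⟨hyle, by rw [φ0]; exact hd.le⟩ : (0:ℝ) ∈ Set.Icc (φ y) (φ 0))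
  have hp0 : 0 < p := by
    rcases lt_or_eq_of_le hpmem.1 with h | h
    · exact h
    · exfalso; rw [← h, φ0] at hφp; linarith
  -- existence of negative critical point
  have hexM : ∃ y, y < 0 ∧ φ y ≤ 0 := by
    by_contra h
    push_neg at h
    have mono : StrictMonoOn F (Set.Iic 0) := by
      apply strictMonoOn_of_deriv_pos (convex_Iic 0) Fc.continuousOn
      intro x hx
      rw [interior_Iic] at hx
      rw [derivF]
      exact h x hx
    obtain ⟨x, hx1, hx2⟩ :=
      ((hcF2.eventually (eventually_gt_atTop (1:ℝ))).and (eventually_le_atBot (-1:ℝ))).exists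
    have h2 : F x ≤ F 0 := mono.monotoneOn (by simp; linarith) Set.self_mem_Iic (by linarith)
    rw [hF0] at h2
    linarith
  obtain ⟨z, hz, hzle⟩ := hexM
  obtain ⟨m, hmmem, hφm⟩ :=
    intermediate_value_Icc hz.le φcont.continuousOn
      (⟨hzle, by rw [φ0]; exact hd.le⟩ : (0:ℝ) ∈ Set.Icc (φ z) (φ 0))
  have hm0 : m < 0 := by
    rcases lt_or_eq_of_le hmmem.2 with h | h
    · exact h
    · exfalso; rw [h, φ0] at hφm; linarith
  have hmp : m < p := hm0.trans hp0
  -- sign of φ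
  have sign1 : ∀ x, m < x → x < p → 0 < φ x := by
    intro x h1 h2
    rcases le_total x 0 with hx | hx
    · have := φmono hm0.le hx h1
      rwa [hφm] at this
    · have := φanti hx hp0.le h2
      rwa [hφp] at this
  have sign2 : ∀ x, p < x → φ x < 0 := by
    intro x h
    have := φanti hp0.le (hp0.le.trans h.le) h
    rwa [hφp] at this
  have sign3 : ∀ x, x < m → φ x < 0 := by
    intro x h
    have := φmono (h.le.trans hm0.le) hm0.le h
    rwa [hφm] at this
  -- monotonicity of F
  have monoMid : StrictMonoOn F (Set.Icc m p) := by
    apply strictMonoOn_of_deriv_pos (convex_Icc m p) Fc.continuousOn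
    intro x hx
    rw [interior_Icc] at hx
    rw [derivF]
    exact sign1 x hx.1 hx.2
  have antiR : StrictAntiOn F (Set.Ici p) := by
    apply strictAntiOn_of_deriv_neg (convex_Ici p) Fc.continuousOn
    intro x hx
    rw [interior_Ici] at hx
    rw [derivF]
    exact sign2 x hx
  have antiL : StrictAntiOn F (Set.Iic m) := by
    apply strictAntiOn_of_deriv_neg (convex_Iic m) Fc.continuousOn
    intro x hx
    rw [interior_Iic] at hx
    rw [derivF]
    exact sign3 x hx
  have hFm : F m < 0 := by
    have := monoMid ⟨le_refl m, hmp.le⟩ ⟨hm0.le, hp0.le⟩ hm0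
    rwa [hF0] at this
  have hFp : 0 < F p := by
    have := monoMid ⟨hm0.le, hp0.le⟩ ⟨hmp.le, le_refl p⟩ hp0
    rwa [hF0] at this
  -- global bounds
  have FleP : ∀ x, m ≤ x → F x ≤ F p := by
    intro x hx
    rcases le_total x p with h | h
    · exact monoMid.monotoneOn ⟨hx, h⟩ ⟨hmp.le, le_refl p⟩ h
    · exact antiR.antitoneOn Set.self_mem_Ici h h
  have FgeM : ∀ x, x ≤ p → F m ≤ F x := by
    intro x hx
    rcases le_total x m with h | h
    · exact antiL.antitoneOn h Set.self_mem_Iic h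
    · exact monoMid.monotoneOn ⟨le_refl m, hmp.le⟩ ⟨h, hx⟩ h
  have maxp : IsLocalMax F p :=
    Filter.eventually_of_mem (Ioi_mem_nhds hmp) (fun x hx => FleP x (le_of_lt hx))
  have minm : IsLocalMin F m :=
    Filter.eventually_of_mem (Iio_mem_nhds hmp) (fun x hx => FgeM x (le_of_lt hx))
  have uniqMax : ∀ x, IsLocalMax F x → x = p := by
    intro x hx
    have hd0 : φ x = 0 := by rw [← derivF]; exact hx.deriv_eq_zero
    by_contra hne
    rcases lt_trichotomy x m with h | h | h
    · exact absurd hd0 (ne_of_lt (sign3 x h))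
    · subst h
      have h1 : ∀ᶠ y in nhdsWithin x (Set.Ioi x), F y ≤ F x := hx.filter_mono nhdsWithin_le_nhds
      have h2 : Set.Ioo x p ∈ nhdsWithin x (Set.Ioi x) := Ioo_mem_nhdsGT_of_mem ⟨le_refl x, hmp⟩
      obtain ⟨y, hy1, hy2⟩ := (h1.and (eventually_of_mem h2 fun y hy => hy)).exists
      have := monoMid ⟨le_refl x, hmp.le⟩ ⟨hy2.1.le, hy2.2.le⟩ hy2.1
      linarith
    · rcases lt_trichotomy x p with h2 | h2 | h2
      · exact absurd hd0 (ne_of_gt (sign1 x h h2))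
      · exact hne h2
      · exact absurd hd0 (ne_of_lt (sign2 x h2))
  have uniqMin : ∀ x, IsLocalMin F x → x = m := by
    intro x hx
    have hd0 : φ x = 0 := by rw [← derivF]; exact hx.deriv_eq_zero
    by_contra hne
    rcases lt_trichotomy x m with h | h | h
    · exact absurd hd0 (ne_of_lt (sign3 x h))
    · exact hne h
    · rcases lt_trichotomy x p with h2 | h2 | h2
      · exact absurd hd0 (ne_of_gt (sign1 x h h2))
      · subst h2
        have h1 : ∀ᶠ y in nhdsWithin x (Set.Iio x), F x ≤ F y := hx.filter_mono nhdsWithin_le_nhds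
        have h2 : Set.Ioo m x ∈ nhdsWithin x (Set.Iio x) := Ioo_mem_nhdsLT_of_mem ⟨hmp, le_refl x⟩
        obtain ⟨y, hy1, hy2⟩ := (h1.and (eventually_of_mem h2 fun y hy => hy)).exists
        have := monoMid ⟨hy2.1.le, hy2.2.le⟩ ⟨hmp.le, le_refl x⟩ hy2.2
        linarith
      · exact absurd hd0 (ne_of_lt (sign2 x h2))
  -- branch solvers
  have solR : ∀ c : ℝ, c ≤ F p → ∃ e, p ≤ e ∧ F e = c ∧ ∀ x, p ≤ x → F x = c → x = e := by
    intro c hc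
    obtain ⟨b, hb1, hb2⟩ :=
      ((hcF.eventually (eventually_le_atBot c)).and (eventually_ge_atTop p)).exists
    obtain ⟨e, he1, he2⟩ :=
      intermediate_value_Icc' hb2 Fc.continuousOn (⟨hb1, hc⟩ : c ∈ Set.Icc (F b) (F p))
    exact ⟨e, he1.1, he2, fun x hx hxc => antiR.injOn hx he1.1 (by rw [hxc, he2])⟩
  have solL : ∀ c : ℝ, F m ≤ c → ∃ a, a ≤ m ∧ F a = c ∧ ∀ x, x ≤ m → F x = c → x = a := by
    intro c hc
    obtain ⟨b, hb1, hb2⟩ :=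
      ((hcF2.eventually (eventually_ge_atTop c)).and (eventually_le_atBot m)).exists
    obtain ⟨a, ha1, ha2⟩ :=
      intermediate_value_Icc' hb2 Fc.continuousOn (⟨hc, hb1⟩ : c ∈ Set.Icc (F m) (F b))
    exact ⟨a, ha1.2, ha2, fun x hx hxc => antiL.injOn hx ha1.2 (by rw [hxc, ha2])⟩
  have solM : ∀ c : ℝ, F m ≤ c → c ≤ F p →
      ∃ b, m ≤ b ∧ b ≤ p ∧ F b = c ∧ ∀ x, m ≤ x → x ≤ p → F x = c → x = b := by
    intro c hc1 hc2
    obtain ⟨b, hb1, hb2⟩ :=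
      intermediate_value_Icc hmp.le Fc.continuousOn (⟨hc1, hc2⟩ : c ∈ Set.Icc (F m) (F p))
    exact ⟨b, hb1.1, hb1.2, hb2, fun x hx1 hx2 hxc => monoMid.injOn ⟨hx1, hx2⟩ hb1 (by rw [hxc, hb2])⟩
  refine ⟨p, m, hp0, hm0, maxp, uniqMax, minm, uniqMin, hFm, hFp, ?_⟩
  intro lamm lamp
  have hlm : lamm = -F p := rfl
  have hlp : lamp = -F m := rfl
  refine ⟨by rw [hlm]; linarith, by rw [hlp]; linarith, ?_⟩
  intro lam
  refine ⟨?_, ?_, ?_⟩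
  · -- three solutions
    intro hlam
    obtain ⟨hl1, hl2⟩ := hlam
    rw [hlm] at hl1
    rw [hlp] at hl2
    have hc1 : F m < -lam := by linarith
    have hc2 : -lam < F p := by linarith
    obtain ⟨a, ha1, ha2, ha3⟩ := solL (-lam) hc1.le
    obtain ⟨b, hb1, hb2, hb3, hb4⟩ := solM (-lam) hc1.le hc2.le
    obtain ⟨e, he1, he2, he3⟩ := solR (-lam) hc2.le
    have ham : a < m := lt_of_le_of_ne ha1 (fun h => by rw [h] at ha2; linarith)
    have hbm : m < b := lt_of_le_of_ne hb1 (fun h => by rw [← h] at hb3; linarith)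
    have hbp : b < p := lt_of_le_of_ne hb2 (fun h => by rw [h] at hb3; linarith)
    have hep : p < e := lt_of_le_of_ne he1 (fun h => by rw [← h] at he2; linarith)
    have hset : {x : ℝ | F x + lam = 0} = {a, b, e} := by
      ext x
      simp only [Set.mem_setOf_eq, Set.mem_insert_iff, Set.mem_singleton_iff]
      constructor
      · intro hx
        have hxc : F x = -lam := by linarith
        rcases le_total x m with h | h
        · exact Or.inl (ha3 x h hxc)
        rcases le_total x p with h2 | h2
        · exact Or.inr (Or.inl (hb4 x h h2 hxc))
        · exact Or.inr (Or.inr (he3 x h2 hxc))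
      · rintro (rfl | rfl | rfl) <;> linarith
    rw [hset]
    exact Set.encard_eq_three.mpr ⟨a, b, e, ne_of_lt (by linarith), ne_of_lt (by linarith),
      ne_of_lt (by linarith), rfl⟩
  · -- two solutions
    rintro (rfl | rfl)
    · -- lam = lamm = -F p
      have hclam : -lamm = F p := by rw [hlm]; ring
      obtain ⟨a, ha1, ha2, ha3⟩ := solL (F p) (by linarith)
      have ham : a < m := lt_of_le_of_ne ha1 (fun h => by rw [h] at ha2; linarith)
      have hset : {x : ℝ | F x + lamm = 0} = {a, p} := by
        ext x
        simp only [Set.mem_setOf_eq, Set.mem_insert_iff, Set.mem_singleton_iff]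
        constructor
        · intro hx
          have hxc : F x = F p := by rw [hlm] at hx; linarith
          rcases le_total x m with h | h
          · exact Or.inl (ha3 x h hxc)
          rcases le_total x p with h2 | h2
          · exact Or.inr (monoMid.injOn ⟨h, h2⟩ ⟨hmp.le, le_refl p⟩ hxc)
          · exact Or.inr (antiR.injOn h2 Set.self_mem_Ici hxc)
        · rintro (rfl | rfl)
          · rw [hlm]; linarith
          · rw [hlm]; ring
      rw [hset]
      exact Set.encard_pair (ne_of_lt (by linarith))
    · -- lam = lamp = -F m
      have hclam : -lamp = F m := by rw [hlp]; ring
      obtain ⟨e, he1, he2, he3⟩ := solR (F m) (by linarith)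
      have hep : p < e := lt_of_le_of_ne he1 (fun h => by rw [← h] at he2; linarith)
      have hset : {x : ℝ | F x + lamp = 0} = {m, e} := by
        ext x
        simp only [Set.mem_setOf_eq, Set.mem_insert_iff, Set.mem_singleton_iff]
        constructor
        · intro hx
          have hxc : F x = F m := by rw [hlp] at hx; linarith
          rcases le_total x m with h | h
          · exact Or.inl (antiL.injOn h Set.self_mem_Iic hxc)
          rcases le_total x p with h2 | h2
          · exact Or.inl (monoMid.injOn ⟨h, h2⟩ ⟨le_refl m, hmp.le⟩ hxc)
          · exact Or.inr (he3 x h2 hxc)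
        · rintro (rfl | rfl)
          · rw [hlp]; ring
          · rw [hlp]; linarith
      rw [hset]
      exact Set.encard_pair (ne_of_lt (by linarith))
  · -- one solution
    intro hlam
    rw [Set.mem_Icc] at hlam
    push_neg at hlam
    rcases lt_or_ge lam lamm with h | h
    · -- -lam > F p
      have hc : F p < -lam := by rw [hlm] at h; linarith
      obtain ⟨a, ha1, ha2, ha3⟩ := solL (-lam) (by linarith)
      have hset : {x : ℝ | F x + lam = 0} = {a} := by
        ext x
        simp only [Set.mem_setOf_eq, Set.mem_singleton_iff]
        constructor
        · intro hx
          have hxc : F x = -lam := by linarith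
          rcases le_total x m with h2 | h2
          · exact ha3 x h2 hxc
          · exfalso; have := FleP x h2; linarith
        · rintro rfl; linarith
      rw [hset]
      exact Set.encard_singleton a
    · have h2 : lamp < lam := hlam h
      have hc : -lam < F m := by rw [hlp] at h2; linarith
      obtain ⟨e, he1, he2, he3⟩ := solR (-lam) (by linarith)
      have hset : {x : ℝ | F x + lam = 0} = {e} := by
        ext x
        simp only [Set.mem_setOf_eq, Set.mem_singleton_iff]
        constructor
        · intro hx
          have hxc : F x = -lam := by linarith
          rcases le_total x p with h2 | h2
          · exfalso; have := FgeM x h2; linarith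
          · exact he3 x h2 hxc
        · rintro rfl; linarith
      rw [hset]
      exact Set.encard_singleton e
end

section
/- Let f : ℝ × ℝ → ℝ be continuous, C¹ in the second variable, and suppose there is γ > 0 such that ∂f/∂x(t,x) ≤ -γ for all (t,x). If x₁ and x₂ are two solutions of x' = f(t,x) defined on [s, T], then |x₁(t) - x₂(t)| ≤ e^{-γ(t-s)} |x₁(s) - x₂(s)| for all t ∈ [s, T]. -/
/-- Mean value inequality: the one-sided dissipativity estimate. -/
lemma mvt_bound (f fx : ℝ → ℝ → ℝ)
    (hderiv : ∀ t x : ℝ, HasDerivAt (fun y => f t y) (fx t x) x)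
    (γ : ℝ) (hbound : ∀ t x : ℝ, fx t x ≤ -γ)
    (t a b : ℝ) : (b - a) * (f t b - f t a) ≤ -γ * (b - a)^2 := by
  rcases lt_trichotomy a b with h | h | h
  · obtain ⟨c, _, hc⟩ := exists_hasDerivAt_eq_slope (fun y => f t y) (fun y => fx t y) h
      (fun x _ => (hderiv t x).continuousAt.continuousWithinAt)
      (fun x _ => hderiv t x)
    rw [eq_div_iff (by linarith : b - a ≠ 0)] at hc
    have hfb : f t b - f t a = fx t c * (b - a) := hc.symm
    have := hbound t c
    nlinarith [sq_nonneg (b - a)]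
  · simp [h]
  · obtain ⟨c, _, hc⟩ := exists_hasDerivAt_eq_slope (fun y => f t y) (fun y => fx t y) h
      (fun x _ => (hderiv t x).continuousAt.continuousWithinAt)
      (fun x _ => hderiv t x)
    rw [eq_div_iff (by linarith : a - b ≠ 0)] at hc
    have hfb : f t a - f t b = fx t c * (a - b) := hc.symm
    have := hbound t c
    nlinarith [sq_nonneg (b - a)]

theorem stmt11 (f fx : ℝ → ℝ → ℝ)
    (hf : Continuous (Function.uncurry f))
    (hfx : Continuous (Function.uncurry fx))
    (hderiv : ∀ t x : ℝ, HasDerivAt (fun y => f t y) (fx t x) x)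
    (γ : ℝ) (hγ : 0 < γ) (hbound : ∀ t x : ℝ, fx t x ≤ -γ)
    (s T : ℝ) (hsT : s ≤ T) (x₁ x₂ : ℝ → ℝ)
    (hx₁ : ∀ t ∈ Set.Icc s T, HasDerivAt x₁ (f t (x₁ t)) t)
    (hx₂ : ∀ t ∈ Set.Icc s T, HasDerivAt x₂ (f t (x₂ t)) t) :
    ∀ t ∈ Set.Icc s T, |x₁ t - x₂ t| ≤ Real.exp (-γ * (t - s)) * |x₁ s - x₂ s| := by
  set u : ℝ → ℝ := fun t => x₁ t - x₂ t with hu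
  set w : ℝ → ℝ := fun t => Real.exp (2*γ*(t-s)) * (u t)^2 with hw
  -- derivative of w at points of Icc
  have hwderiv : ∀ t ∈ Set.Icc s T, HasDerivAt w
      (Real.exp (2*γ*(t-s)) * (2*γ*(u t)^2 + 2 * u t * (f t (x₁ t) - f t (x₂ t)))) t := by
    intro t ht
    have hudiff : HasDerivAt u (f t (x₁ t) - f t (x₂ t)) t := (hx₁ t ht).sub (hx₂ t ht)
    have hexp : HasDerivAt (fun t => Real.exp (2*γ*(t-s))) (2*γ*Real.exp (2*γ*(t-s))) t := by
      have h1 : HasDerivAt (fun t : ℝ => 2*γ*(t-s)) (2*γ) t := by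
        simpa using (((hasDerivAt_id t).sub_const s).const_mul (2*γ))
      simpa [mul_comm] using h1.exp
    have hsq : HasDerivAt (fun t => (u t)^2) (2 * u t * (f t (x₁ t) - f t (x₂ t))) t := by
      simpa [mul_comm, mul_assoc] using hudiff.fun_pow 2
    have := hexp.fun_mul hsq
    exact this.congr_deriv (by ring)
  have hwcont : ContinuousOn w (Set.Icc s T) := fun t ht =>
    (hwderiv t ht).continuousAt.continuousWithinAt
  have hwanti : AntitoneOn w (Set.Icc s T) := by
    apply antitoneOn_of_deriv_nonpos (convex_Icc s T) hwcont
    · intro t ht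
      rw [interior_Icc] at ht
      exact ((hwderiv t (Set.mem_Icc_of_Ioo ht)).differentiableAt).differentiableWithinAt
    · intro t ht
      rw [interior_Icc] at ht
      have ht' := Set.mem_Icc_of_Ioo ht
      rw [(hwderiv t ht').deriv]
      have key := mvt_bound f fx hderiv γ hbound t (x₂ t) (x₁ t)
      have hexp_pos : (0:ℝ) < Real.exp (2*γ*(t-s)) := Real.exp_pos _
      have : 2*γ*(u t)^2 + 2 * u t * (f t (x₁ t) - f t (x₂ t)) ≤ 0 := by
        simp only [hu]; nlinarith [key]
      nlinarith
  intro t ht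
  have hle : w t ≤ w s := hwanti (Set.left_mem_Icc.mpr hsT) ht ht.1
  have h1 : Real.exp (2*γ*(t-s)) * (u t)^2 ≤ (u s)^2 := by
    simpa [hw] using hle
  have hE : Real.exp (2*γ*(t-s)) = (Real.exp (γ*(t-s)))^2 := by
    rw [← Real.exp_nat_mul]; ring_nf
  have hEpos : (0:ℝ) < Real.exp (γ*(t-s)) := Real.exp_pos _
  have h2 : (Real.exp (γ*(t-s)) * |u t|)^2 ≤ |u s|^2 := by
    rw [mul_pow, sq_abs, sq_abs, ← hE]; exact h1
  have h3 : Real.exp (γ*(t-s)) * |u t| ≤ |u s| := by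
    nlinarith [abs_nonneg (u t), abs_nonneg (u s), mul_nonneg hEpos.le (abs_nonneg (u t))]
  have hinv : Real.exp (-γ*(t-s)) = (Real.exp (γ*(t-s)))⁻¹ := by
    rw [← Real.exp_neg]; ring_nf
  rw [hinv]
  have : |u t| ≤ (Real.exp (γ*(t-s)))⁻¹ * |u s| := by
    rw [inv_mul_eq_div, le_div_iff₀ hEpos]
    nlinarith [h3]
  exact this
end

section
/- Let f : ℝ × ℝ → ℝ be continuous, locally Lipschitz in the second variable, and such that x ↦ f(t,x) is concave for every t. Let v(t, s, x) denote the solution with v(s,s,x) = x. Then for every t ≥ s, the map x ↦ v(t, s, x) is concave on the set of initial data x for which the solution is defined up to time t. -/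
/-- One-sided Gronwall-type comparison: if `g s ≤ 0` and `g' r ≤ M * g r`
whenever `g r ≥ 0`, then `g t ≤ 0`. -/
lemma aux_comparison (g g' : ℝ → ℝ) (s t M : ℝ) (hst : s ≤ t)
    (hderiv : ∀ r ∈ Set.Icc s t, HasDerivAt g (g' r) r)
    (hbound : ∀ r ∈ Set.Icc s t, 0 ≤ g r → g' r ≤ M * g r)
    (hs : g s ≤ 0) : g t ≤ 0 := by
  by_contra hgt
  push_neg at hgt
  set S : Set ℝ := Set.Icc s t ∩ g ⁻¹' Set.Iic 0 with hS
  have hgcont : ContinuousOn g (Set.Icc s t) :=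
    fun r hr => (hderiv r hr).continuousAt.continuousWithinAt
  have hSclosed : IsClosed S :=
    hgcont.preimage_isClosed_of_isClosed isClosed_Icc isClosed_Iic
  have hScompact : IsCompact S :=
    isCompact_Icc.of_isClosed_subset hSclosed Set.inter_subset_left
  have hSne : S.Nonempty := ⟨s, ⟨le_refl s, hst⟩, hs⟩
  obtain ⟨r0, hr0mem, hr0ub⟩ : ∃ r0, IsGreatest S r0 :=
    hScompact.exists_isGreatest hSne
  have hsr0 : s ≤ r0 := hr0mem.1.1
  have hr0t : r0 ≤ t := hr0mem.1.2
  have hgr0 : g r0 ≤ 0 := hr0mem.2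
  have hr0lt : r0 < t := lt_of_le_of_ne hr0t (by
    rintro rfl; exact absurd hgt (not_lt.mpr hgr0))
  -- on (r0, t], g > 0
  have hgpos : ∀ r, r0 < r → r ≤ t → 0 < g r := by
    intro r h1 h2
    by_contra hle
    push_neg at hle
    have hrS : r ∈ S := ⟨⟨hsr0.trans h1.le, h2⟩, hle⟩
    exact absurd (hr0ub hrS) (not_le.mpr h1)
  -- h r = g r * exp (-M * r) is antitone on [r0, t]
  set h : ℝ → ℝ := fun r => g r * Real.exp (-M * r) with hhdef
  have hmem : ∀ r ∈ Set.Icc r0 t, r ∈ Set.Icc s t :=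
    fun r hr => ⟨hsr0.trans hr.1, hr.2⟩
  have hexp : ∀ r : ℝ, HasDerivAt (fun r => Real.exp (-M * r))
      (Real.exp (-M * r) * (-M * 1)) r := by
    intro r
    exact ((hasDerivAt_id r).const_mul (-M)).exp
  have hhderiv : ∀ r ∈ Set.Icc s t,
      HasDerivAt h (g' r * Real.exp (-M * r) + g r * (Real.exp (-M * r) * (-M * 1))) r :=
    fun r hr => (hderiv r hr).mul (hexp r)
  have hhcont : ContinuousOn h (Set.Icc r0 t) :=
    fun r hr => (hhderiv r (hmem r hr)).continuousAt.continuousWithinAt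
  have hint : interior (Set.Icc r0 t) = Set.Ioo r0 t := interior_Icc
  have hhdiff : DifferentiableOn ℝ h (interior (Set.Icc r0 t)) := by
    rw [hint]
    exact fun r hr =>
      (hhderiv r (hmem r ⟨hr.1.le, hr.2.le⟩)).differentiableAt.differentiableWithinAt
  have hhnonpos : ∀ r ∈ interior (Set.Icc r0 t), deriv h r ≤ 0 := by
    rw [hint]
    intro r hr
    have hr' : r ∈ Set.Icc s t := hmem r ⟨hr.1.le, hr.2.le⟩
    have hg : 0 < g r := hgpos r hr.1 hr.2.le
    have hb : g' r ≤ M * g r := hbound r hr' hg.le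
    rw [(hhderiv r hr').deriv]
    have hE : 0 < Real.exp (-M * r) := Real.exp_pos _
    nlinarith
  have hanti : AntitoneOn h (Set.Icc r0 t) :=
    antitoneOn_of_deriv_nonpos (convex_Icc r0 t) hhcont hhdiff hhnonpos
  have := hanti ⟨le_refl r0, hr0lt.le⟩ ⟨hr0lt.le, le_refl t⟩ hr0lt.le
  have hE1 : 0 < Real.exp (-M * r0) := Real.exp_pos _
  have hE2 : 0 < Real.exp (-M * t) := Real.exp_pos _
  simp only [hhdef] at this
  nlinarith [mul_nonpos_of_nonpos_of_nonneg hgr0 hE1.le, mul_pos hgt hE2]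

theorem stmt13 (f : ℝ → ℝ → ℝ)
    (hf : Continuous (Function.uncurry f))
    (hlip : ∀ t x : ℝ, ∃ ε > (0:ℝ), ∃ L : NNReal,
      LipschitzOnWith L (f t) (Metric.ball x ε))
    (hconc : ∀ t : ℝ, ConcaveOn ℝ Set.univ (f t))
    (s t : ℝ) (hst : s ≤ t) (D : Set ℝ) (u : ℝ → ℝ → ℝ)
    (husol : ∀ x ∈ D, ∀ r ∈ Set.Icc s t, HasDerivAt (fun r => u r x) (f r (u r x)) r)
    (huinit : ∀ x ∈ D, u s x = x) :
    ∀ x ∈ D, ∀ y ∈ D, ∀ a b : ℝ, 0 ≤ a → 0 ≤ b → a + b = 1 →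
      a * x + b * y ∈ D → a * u t x + b * u t y ≤ u t (a * x + b * y) := by
  intro x hx y hy a b ha hb hab hxy
  set c := a * x + b * y with hc
  -- the solution through the convex combination
  set z : ℝ → ℝ := fun r => u r c with hz
  have hzcont : ContinuousOn z (Set.Icc s t) :=
    fun r hr => (husol c hxy r hr).continuousAt.continuousWithinAt
  -- a uniform bound for the slope of f r at z r
  set F : ℝ → ℝ := fun r => f r (z r) - f r (z r - 1) with hF
  have hFcont : ContinuousOn F (Set.Icc s t) := by
    have h1 : ContinuousOn (fun r => f r (z r)) (Set.Icc s t) :=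
      hf.comp_continuousOn (continuousOn_id.prodMk hzcont)
    have h2 : ContinuousOn (fun r => f r (z r - 1)) (Set.Icc s t) :=
      hf.comp_continuousOn (continuousOn_id.prodMk (hzcont.sub continuousOn_const))
    exact h1.sub h2
  obtain ⟨rM, hrM, hM⟩ := isCompact_Icc.exists_isMaxOn ⟨s, le_refl s, hst⟩ hFcont
  set M := F rM with hMdef
  -- the deficit function
  set g : ℝ → ℝ := fun r => a * u r x + b * u r y - u r c with hg
  set g' : ℝ → ℝ := fun r => a * f r (u r x) + b * f r (u r y) - f r (z r) with hg'
  have hderiv : ∀ r ∈ Set.Icc s t, HasDerivAt g (g' r) r := by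
    intro r hr
    exact (((husol x hx r hr).const_mul a).add ((husol y hy r hr).const_mul b)).sub
      (husol c hxy r hr)
  have hbound : ∀ r ∈ Set.Icc s t, 0 ≤ g r → g' r ≤ M * g r := by
    intro r hr hgr
    set p := u r x
    set q := u r y
    have hw : z r ≤ a * p + b * q := by
      simp only [hg] at hgr; linarith
    -- concavity: a f p + b f q ≤ f (a p + b q)
    have hcc : a * f r p + b * f r q ≤ f r (a * p + b * q) := by
      have := (hconc r).2 (Set.mem_univ p) (Set.mem_univ q) ha hb hab
      simpa [smul_eq_mul] using this
    -- slope bound: f (w) - f (z r) ≤ (w - z r) * F r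
    have hslope : f r (a * p + b * q) - f r (z r) ≤ (a * p + b * q - z r) * F r := by
      rcases eq_or_lt_of_le hw with heq | hlt
      · rw [← heq]; simp
      · have hsl := (hconc r).slope_anti_adjacent (Set.mem_univ (z r - 1))
          (Set.mem_univ (a * p + b * q)) (by linarith : z r - 1 < z r) hlt
        have hpos : 0 < a * p + b * q - z r := by linarith
        have hden : z r - (z r - 1) = 1 := by ring
        rw [hden, div_one, div_le_iff₀ hpos] at hsl
        simp only [hF]
        nlinarith [hsl]
    have hFM : F r ≤ M := hM hr
    have hgr' : g r = a * p + b * q - z r := by simp [hg]; rfl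
    calc g' r = a * f r p + b * f r q - f r (z r) := rfl
      _ ≤ f r (a * p + b * q) - f r (z r) := by linarith
      _ ≤ (a * p + b * q - z r) * F r := hslope
      _ ≤ (a * p + b * q - z r) * M := by
          apply mul_le_mul_of_nonneg_left hFM
          rw [← hgr']; exact hgr
      _ = M * g r := by rw [hgr']; ring
  have hs0 : g s ≤ 0 := by
    simp only [hg, hz, huinit x hx, huinit y hy, huinit c hxy]
    linarith
  have := aux_comparison g g' s t M hst hderiv hbound hs0
  simp only [hg] at this
  linarith
end

section
/- Let Ω be a compact metric space and G : Ω × ℝ → ℝ continuous. For each ω define α(ω) := inf{x < 0 : G(ω, t) ≤ 0 for all t ∈ [x, 0]} if this set is nonempty, and α(ω) := 0 otherwise (so α takes values in [-∞, 0]). Then α is lower semicontinuous: if ω_n → ω₀ then α(ω₀) ≤ liminf α(ω_n). -/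
/-!
If `α(ω₀) > y`, pick a real `c` with `y < c < α(ω₀)`. Then `c < 0` is not a band endpoint, so
`G(ω₀, t) > 0` for some `t ∈ [c, 0]`. By continuity `G(ω, t) > 0` for all `ω` near `ω₀`, and a
band of `ω` cannot reach past `t`, so `α(ω) ≥ t ≥ c > y`.
-/

open Classical in
/-- The set of left endpoints `x < 0` such that `G(ω,·) ≤ 0` on `[x,0]`. -/
def bandSet {Ω : Type*} (G : Ω × ℝ → ℝ) (ω : Ω) : Set ℝ :=
  {x : ℝ | x < 0 ∧ ∀ t ∈ Set.Icc x 0, G (ω, t) ≤ 0}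

open Classical in
/-- The left boundary map of the d-concavity band, with values in `[-∞, 0]`. -/
noncomputable def bandAlpha {Ω : Type*} (G : Ω × ℝ → ℝ) (ω : Ω) : EReal :=
  if (bandSet G ω).Nonempty then sInf ((fun x : ℝ => (x : EReal)) '' bandSet G ω) else 0

section Band

variable {Ω : Type*} {G : Ω × ℝ → ℝ} {ω : Ω}

theorem bandAlpha_le_coe_of_mem {x : ℝ} (hx : x ∈ bandSet G ω) : bandAlpha G ω ≤ x := by
  rw [bandAlpha, if_pos ⟨x, hx⟩]
  exact sInf_le ⟨x, hx, rfl⟩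

theorem bandAlpha_le_zero : bandAlpha G ω ≤ 0 := by
  by_cases h : (bandSet G ω).Nonempty
  · obtain ⟨x, hx⟩ := h
    exact (bandAlpha_le_coe_of_mem hx).trans (EReal.coe_nonpos.mpr hx.1.le)
  · rw [bandAlpha, if_neg h]

theorem lt_of_mem_bandSet_of_pos {x t : ℝ} (hx : x ∈ bandSet G ω) (ht : t ≤ 0)
    (hpos : 0 < G (ω, t)) : t < x := by
  by_contra! htx
  exact (hx.2 t ⟨htx, ht⟩).not_gt hpos

theorem coe_le_bandAlpha_of_pos {t : ℝ} (ht : t ≤ 0) (hpos : 0 < G (ω, t)) :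
    (t : EReal) ≤ bandAlpha G ω := by
  unfold bandAlpha
  split_ifs
  · refine le_sInf ?_
    rintro _ ⟨x, hx, rfl⟩
    exact EReal.coe_le_coe_iff.mpr (lt_of_mem_bandSet_of_pos hx ht hpos).le
  · exact EReal.coe_nonpos.mpr ht

theorem exists_pos_of_coe_lt_bandAlpha {c : ℝ} (hc : (c : EReal) < bandAlpha G ω) :
    ∃ t ∈ Set.Icc c 0, 0 < G (ω, t) := by
  have hc0 : c < 0 := EReal.coe_neg'.mp (hc.trans_le bandAlpha_le_zero)
  have hcband : c ∉ bandSet G ω := fun hmem => (bandAlpha_le_coe_of_mem hmem).not_gt hc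
  by_contra! hall
  exact hcband ⟨hc0, hall⟩

end Band

theorem stmt16_general {Ω : Type*} [MetricSpace Ω]
    (G : Ω × ℝ → ℝ) (hG : Continuous G) :
    LowerSemicontinuous (bandAlpha G) := by
  intro ω₀ y hy
  obtain ⟨c, hyc, hcα⟩ := EReal.exists_between_coe_real hy
  obtain ⟨t, ht, hpos⟩ := exists_pos_of_coe_lt_bandAlpha hcα
  have hopen : IsOpen {ω : Ω | 0 < G (ω, t)} :=
    isOpen_lt continuous_const (hG.comp (Continuous.prodMk_left t))
  filter_upwards [hopen.mem_nhds hpos] with ω hω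
  calc y < c := hyc
    _ ≤ t := EReal.coe_le_coe_iff.mpr ht.1
    _ ≤ bandAlpha G ω := coe_le_bandAlpha_of_pos ht.2 hω

theorem stmt16 {Ω : Type*} [MetricSpace Ω] [CompactSpace Ω]
    (G : Ω × ℝ → ℝ) (hG : Continuous G) :
    LowerSemicontinuous (bandAlpha G) :=
  stmt16_general G hG
end

section
/- Let d > 0 be constant, c : ℝ → ℝ continuous and bounded, and g : ℝ → ℝ continuous with g(x) ≤ 0 for all x and g(x) = 0 for x ≤ 0. Let b be the unique bounded solution of the linear equation x' = d·x + c(t). Then every bounded solution x̄ : ℝ → ℝ of x' = d·x + c(t) + g(x) satisfies x̄(t) ≥ b(t) for all t ∈ ℝ. Moreover, if x̄ is a bounded solution with x̄(t) ≤ 0 for all t, then x̄ = b. -/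
theorem stmt19 (d : ℝ) (hd : 0 < d) (c g : ℝ → ℝ)
    (hc : Continuous c) (hcb : Bornology.IsBounded (Set.range c))
    (hg : Continuous g) (hgneg : ∀ x : ℝ, g x ≤ 0)
    (hgzero : ∀ x : ℝ, x ≤ 0 → g x = 0)
    (b : ℝ → ℝ) (hb : ∀ t : ℝ, HasDerivAt b (d * b t + c t) t)
    (hbb : Bornology.IsBounded (Set.range b))
    (x : ℝ → ℝ) (hx : ∀ t : ℝ, HasDerivAt x (d * x t + c t + g (x t)) t)
    (hxb : Bornology.IsBounded (Set.range x)) :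
    (∀ t : ℝ, b t ≤ x t) ∧ ((∀ t : ℝ, x t ≤ 0) → x = b) := by
  -- bound for |x t - b t|
  obtain ⟨Mx, hMx⟩ := isBounded_iff_forall_norm_le.mp hxb
  obtain ⟨Mb, hMb⟩ := isBounded_iff_forall_norm_le.mp hbb
  set M := Mx + Mb with hM
  have hM' : ∀ t, |x t - b t| ≤ M := by
    intro t
    have h1 : |x t| ≤ Mx := hMx _ ⟨t, rfl⟩
    have h2 : |b t| ≤ Mb := hMb _ ⟨t, rfl⟩
    calc |x t - b t| ≤ |x t| + |b t| := abs_sub _ _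
      _ ≤ M := by simp [hM]; linarith
  set u : ℝ → ℝ := fun t => (x t - b t) * Real.exp (-(d * t)) with hu
  have hu' : ∀ t, HasDerivAt u (g (x t) * Real.exp (-(d * t))) t := by
    intro t
    have he : HasDerivAt (fun t => Real.exp (-(d * t)))
        (Real.exp (-(d * t)) * (-d)) t := by
      have : HasDerivAt (fun t : ℝ => -(d * t)) (-d) t := by
        simpa using ((hasDerivAt_id t).const_mul d).fun_neg
      exact (Real.hasDerivAt_exp _).comp t this
    have hxb' : HasDerivAt (fun t => x t - b t)
        ((d * x t + c t + g (x t)) - (d * b t + c t)) t := (hx t).sub (hb t)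
    have := hxb'.fun_mul he
    exact this.congr_deriv (by ring)
  have hrel : ∀ t, x t - b t = u t * Real.exp (d * t) := by
    intro t
    simp only [hu]
    rw [mul_assoc, ← Real.exp_add]
    simp
  -- Part 1
  have part1 : ∀ t : ℝ, b t ≤ x t := by
    intro t0
    by_contra hlt
    push_neg at hlt
    have hu0 : u t0 < 0 := by
      have := Real.exp_pos (-(d * t0))
      have : x t0 - b t0 < 0 := by linarith
      exact mul_neg_of_neg_of_pos this (Real.exp_pos _)
    -- u is antitone
    have hanti : Antitone u := by
      apply antitone_of_deriv_nonpos
      · exact fun t => (hu' t).differentiableAt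
      · intro t
        rw [(hu' t).deriv]
        exact mul_nonpos_of_nonpos_of_nonneg (hgneg _) (Real.exp_pos _).le
    set R := (M + 1) / (-(u t0)) with hR
    have hRpos : 0 < R := div_pos (by linarith [hM' t0, abs_nonneg (x t0 - b t0)]) (by linarith)
    set t1 := max t0 (Real.log R / d) with ht1
    have hle : u t1 ≤ u t0 := hanti (le_max_left _ _)
    have hexp : R ≤ Real.exp (d * t1) := by
      rw [← Real.exp_log hRpos]
      apply Real.exp_le_exp.mpr
      have : Real.log R / d ≤ t1 := le_max_right _ _
      calc Real.log R = d * (Real.log R / d) := by field_simp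
        _ ≤ d * t1 := by nlinarith
    have hxbt1 : x t1 - b t1 ≤ u t0 * Real.exp (d * t1) := by
      rw [hrel t1]
      exact mul_le_mul_of_nonneg_right hle (Real.exp_pos _).le
    have h2 : u t0 * Real.exp (d * t1) ≤ u t0 * R := by
      exact mul_le_mul_of_nonpos_left hexp hu0.le
    have h3 : u t0 * R = -(M + 1) := by
      have key : ∀ a : ℝ, a ≠ 0 → a * ((M + 1) / (-a)) = -(M + 1) := by
        intro a ha
        have h : a * ((M + 1) / (-a)) = -(a / a) * (M + 1) := by ring
        rw [h, div_self ha]; ring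
      exact key (u t0) hu0.ne
    have := hM' t1
    rw [abs_le] at this
    linarith [hxbt1, h2, this.1]
  refine ⟨part1, ?_⟩
  -- Part 2
  intro hx0
  have hu'0 : ∀ t, HasDerivAt u 0 t := by
    intro t
    have := hu' t
    rwa [hgzero _ (hx0 t), zero_mul] at this
  have hconst : ∀ t, u t = u 0 := by
    intro t
    exact is_const_of_deriv_eq_zero (fun s => (hu'0 s).differentiableAt)
      (fun s => (hu'0 s).deriv) t 0
  have hu0nonneg : 0 ≤ u 0 := by
    have := part1 0
    have h1 : u 0 = (x 0 - b 0) * Real.exp (-(d * 0)) := rfl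
    rw [h1]
    exact mul_nonneg (by linarith) (Real.exp_pos _).le
  have hu0 : u 0 = 0 := by
    by_contra hne
    have hpos : 0 < u 0 := lt_of_le_of_ne hu0nonneg (Ne.symm hne)
    set R := (M + 1) / (u 0) with hR
    have hRpos : 0 < R := div_pos (by linarith [hM' 0, abs_nonneg (x 0 - b 0)]) hpos
    set t1 := Real.log R / d with ht1
    have hexp : R ≤ Real.exp (d * t1) := by
      rw [← Real.exp_log hRpos]
      apply Real.exp_le_exp.mpr
      rw [ht1]; field_simp; exact le_rfl
    have h1 : x t1 - b t1 = u 0 * Real.exp (d * t1) := by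
      rw [hrel t1, hconst t1]
    have h2 : u 0 * R ≤ u 0 * Real.exp (d * t1) :=
      mul_le_mul_of_nonneg_left hexp hpos.le
    have h3 : u 0 * R = M + 1 := by
      have key : ∀ a : ℝ, a ≠ 0 → a * ((M + 1) / a) = M + 1 := by
        intro a ha
        have h : a * ((M + 1) / a) = (a / a) * (M + 1) := by ring
        rw [h, div_self ha]; ring
      exact key (u 0) hpos.ne'
    have := hM' t1
    rw [abs_le] at this
    linarith [this.2]
  funext t
  have := hrel t
  rw [hconst t, hu0, zero_mul] at this
  linarith
end
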